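/- Let s¹, s² ∈ Ṡ with s¹ < s², let t ∈ Ṡ, and let j ≥ 1 be such that σ^j(t) is defined. Then the j-th entries of itin_{s¹}(t) and itin_{s²}(t) coincide if and only if σ^j(t) ∉ [s¹, s²]. Consequently, itin⁻_{s¹}(t) = itin⁺_{s²}(t) if and only if σ^k(t) ∉ (s¹, s²) for every k ≥ 1 for which σ^k(t) is defined. -/
import Mathlib


noncomputable section

/-- Entries of an address: a real number or `∞`. -/
abbrev Entry : Type := WithTop ℝ

/-- An address is a sequence of entries. -/
abbrev Addr : Type := ℕ → Entry

/-- The address `∞` (all of whose entries are infinite). -/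
def topAddr : Addr := fun _ => ⊤

/-- The shift map `σ`, deleting the first entry. -/
def shift (a : Addr) : Addr := fun k => a (k + 1)

/-- The iterated shift `σ^k`. -/
def shiftIter (a : Addr) (k : ℕ) : Addr := fun j => a (j + k)

/-- `σ^k(a)` is defined (all earlier iterates differ from `∞`). -/
def shiftDef (a : Addr) (k : ℕ) : Prop := ∀ j, j < k → shiftIter a j ≠ topAddr

/-- Prepending an entry to an address. -/
def consAddr (x : Entry) (a : Addr) : Addr := fun k => if k = 0 then x else a (k - 1)

/-- The lexicographic (strict) order on addresses. -/
def addrLt (a b : Addr) : Prop := ∃ k, (∀ j, j < k → a j = b j) ∧ a k < b k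

/-- The lexicographic order on addresses. -/
def addrLe (a b : Addr) : Prop := addrLt a b ∨ a = b

/-- Infinite external addresses: all entries are integers. -/
def IsExtAddr (a : Addr) : Prop := ∀ k, ∃ m : ℤ, a k = ((m : ℝ) : Entry)

/-- Intermediate external addresses of length `n ≥ 1`: the first `n - 2` entries are
integers, the `(n-1)`-st entry lies in `ℤ + 1/2`, and all further entries are `∞`
(for `n = 1` this is the address `∞` itself). -/
def IsIntermediate (a : Addr) (n : ℕ) : Prop :=
  1 ≤ n ∧ (∀ k, k + 2 < n → ∃ m : ℤ, a k = ((m : ℝ) : Entry)) ∧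
    (∀ k, k + 2 = n → ∃ m : ℤ, a k = (((m : ℝ) + 1 / 2 : ℝ) : Entry)) ∧
    (∀ k, n ≤ k + 1 → a k = ⊤)

/-- Membership in `Ṡ`: infinite external addresses and intermediate ones of length `≥ 2`. -/
def InSDot (a : Addr) : Prop := IsExtAddr a ∨ ∃ n, 2 ≤ n ∧ IsIntermediate a n

/-- Membership in `S̄ = Ṡ ∪ {∞}`. -/
def InSBar (a : Addr) : Prop := InSDot a ∨ a = topAddr

/-- `a` is periodic of (exact) period `n`. -/
def PeriodicAddr (a : Addr) (n : ℕ) : Prop :=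
  1 ≤ n ∧ shiftIter a n = a ∧ ∀ m, 1 ≤ m → m < n → shiftIter a m ≠ a

/-- Itinerary entries: integers `j`, boundary symbols `[j/(j-1)]` (encoded `bdy j`),
or the symbol `*`. -/
inductive ItinEntry : Type
  | int : ℤ → ItinEntry
  | bdy : ℤ → ItinEntry
  | star : ItinEntry
  deriving DecidableEq

open scoped Classical in
/-- The itinerary `itin_s(r)`; position `k` holds the entry `u_{k+1}` of the paper:
`u_{k+1} = j` if `js < σ^k(r) < (j+1)s`, the boundary symbol `[j/(j-1)]` if `σ^k(r) = js`,
and `*` if `σ^k(r) = ∞`. -/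
def itin (s r : Addr) : ℕ → ItinEntry := fun k =>
  if shiftIter r k = topAddr then ItinEntry.star
  else if h : ∃ j : ℤ, shiftIter r k = consAddr ((j : ℝ) : Entry) s then ItinEntry.bdy h.choose
  else if h : ∃ j : ℤ, addrLt (consAddr ((j : ℝ) : Entry) s) (shiftIter r k) ∧
      addrLt (shiftIter r k) (consAddr (((j + 1 : ℤ) : ℝ) : Entry) s) then ItinEntry.int h.choose
  else ItinEntry.star

/-- Replace each boundary symbol `[j/(j-1)]` by `j`. -/
def entryPlus : ItinEntry → ItinEntry
  | ItinEntry.bdy j => ItinEntry.int j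
  | e => e

/-- Replace each boundary symbol `[j/(j-1)]` by `j - 1`. -/
def entryMinus : ItinEntry → ItinEntry
  | ItinEntry.bdy j => ItinEntry.int (j - 1)
  | e => e

/-- The itinerary `itin⁺_s(r)`. -/
def itinPlus (s r : Addr) : ℕ → ItinEntry := fun k => entryPlus (itin s r k)

/-- The itinerary `itin⁻_s(r)`. -/
def itinMinus (s r : Addr) : ℕ → ItinEntry := fun k => entryMinus (itin s r k)

/-- The periodic itinerary `(u_1 … u_n)^∞` (with `u_i` encoded as `u (i - 1)`). -/
def perItin (u : ℕ → ℤ) (n : ℕ) : ℕ → ItinEntry := fun k => ItinEntry.int (u (k % n))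

/-- The finite itinerary word `u_1 … u_{n-1} *` (star from position `n - 1` onwards). -/
def finWord (u : ℕ → ℤ) (n : ℕ) : ℕ → ItinEntry := fun k =>
  if k + 1 < n then ItinEntry.int (u k) else ItinEntry.star

/-- A combinatorial characteristic ray pair of period `n` with itinerary `(u_1 … u_n)^∞`. -/
def CharRayPair (rm rp : Addr) (n : ℕ) (u : ℕ → ℤ) : Prop :=
  IsExtAddr rm ∧ IsExtAddr rp ∧ PeriodicAddr rm n ∧ PeriodicAddr rp n ∧ addrLt rm rp ∧
    (∀ k, 1 ≤ k → ¬(addrLt rm (shiftIter rm k) ∧ addrLt (shiftIter rm k) rp)) ∧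
    (∀ k, 1 ≤ k → ¬(addrLt rm (shiftIter rp k) ∧ addrLt (shiftIter rp k) rp)) ∧
    itinMinus rm rm = perItin u n ∧ itinMinus rm rp = perItin u n ∧
    addrLt (shiftIter rp (n - 1)) (shiftIter rm (n - 1))

namespace Stmt6Aux

lemma shift_shiftIter (a : Addr) (k : ℕ) : shift (shiftIter a k) = shiftIter a (k+1) := by
  funext j
  show a (j + 1 + k) = a (j + (k + 1))
  congr 1; omega

lemma shiftIter_top_mono {a : Addr} {i k : ℕ} (h : shiftIter a i = topAddr) (hik : i ≤ k) :
    shiftIter a k = topAddr := by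
  funext j
  have h' := congrFun h (j + (k - i))
  show a (j + k) = ⊤
  rw [show j + k = j + (k - i) + i by omega]
  exact h'

lemma addrLt_irrefl (a : Addr) : ¬ addrLt a a := by
  rintro ⟨k, _, hk⟩; exact lt_irrefl _ hk

lemma addrLt_asymm {a b : Addr} (h1 : addrLt a b) (h2 : addrLt b a) : False := by
  obtain ⟨k1, e1, l1⟩ := h1; obtain ⟨k2, e2, l2⟩ := h2
  rcases lt_trichotomy k1 k2 with h | h | h
  · exact absurd (e2 k1 h) (ne_of_gt l1)
  · subst h; exact lt_irrefl _ (l1.trans l2)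
  · exact absurd (e1 k2 h) (ne_of_gt l2)

lemma addrLt_trans {a b c : Addr} (h1 : addrLt a b) (h2 : addrLt b c) : addrLt a c := by
  obtain ⟨k1, e1, l1⟩ := h1; obtain ⟨k2, e2, l2⟩ := h2
  rcases lt_trichotomy k1 k2 with h | h | h
  · exact ⟨k1, fun j hj => (e1 j hj).trans (e2 j (hj.trans h)), lt_of_lt_of_eq l1 (e2 k1 h)⟩
  · subst h; exact ⟨k1, fun j hj => (e1 j hj).trans (e2 j hj), l1.trans l2⟩
  · exact ⟨k2, fun j hj => (e1 j (hj.trans h)).trans (e2 j hj), lt_of_eq_of_lt (e1 k2 h) l2⟩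

lemma addr_trichotomy (a b : Addr) : addrLt a b ∨ a = b ∨ addrLt b a := by
  by_cases h : a = b
  · exact Or.inr (Or.inl h)
  have hne : ∃ k, a k ≠ b k := by
    by_contra hc; push_neg at hc; exact h (funext hc)
  classical
  have hk : a (Nat.find hne) ≠ b (Nat.find hne) := Nat.find_spec hne
  have hj : ∀ j, j < Nat.find hne → a j = b j := fun j hj =>
    not_not.mp (Nat.find_min hne hj)
  rcases lt_or_gt_of_ne hk with h' | h'
  · exact Or.inl ⟨_, hj, h'⟩
  · exact Or.inr (Or.inr ⟨_, fun j hjk => (hj j hjk).symm, h'⟩)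

lemma not_top_addrLt (b : Addr) : ¬ addrLt topAddr b := by
  rintro ⟨k, _, hk⟩; exact not_top_lt hk

lemma consAddr_succ (x : Entry) (a : Addr) (k : ℕ) : consAddr x a (k+1) = a k := rfl

lemma cons_eq_cons {x y : Entry} {a b : Addr} :
    consAddr x a = consAddr y b ↔ x = y ∧ a = b := by
  constructor
  · intro h
    refine ⟨congrFun h 0, funext fun k => ?_⟩
    have := congrFun h (k+1)
    simpa [consAddr_succ] using this
  · rintro ⟨rfl, rfl⟩; rfl

lemma eq_cons_self (a : Addr) : a = consAddr (a 0) (shift a) := by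
  funext k
  cases k with
  | zero => rfl
  | succ k => simp [consAddr_succ, shift]

lemma cons_lt_cons {x y : Entry} {a b : Addr} :
    addrLt (consAddr x a) (consAddr y b) ↔ x < y ∨ (x = y ∧ addrLt a b) := by
  constructor
  · rintro ⟨k, he, hl⟩
    cases k with
    | zero => exact Or.inl hl
    | succ k =>
      refine Or.inr ⟨he 0 (Nat.succ_pos k), ⟨k, fun j hj => ?_, ?_⟩⟩
      · have := he (j+1) (by omega)
        simpa [consAddr_succ] using this
      · simpa [consAddr_succ] using hl
  · rintro (h | ⟨rfl, k, he, hl⟩)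
    · exact ⟨0, fun j hj => absurd hj (Nat.not_lt_zero j), h⟩
    · refine ⟨k+1, fun j hj => ?_, by simpa [consAddr_succ] using hl⟩
      cases j with
      | zero => rfl
      | succ j => simpa [consAddr_succ] using he j (by omega)

abbrev icons (m : ℤ) (s : Addr) : Addr := consAddr ((m : ℝ) : Entry) s

lemma icoe_lt_icoe {a b : ℤ} (h : a < b) : ((a : ℝ) : Entry) < ((b : ℝ) : Entry) := by
  exact_mod_cast h

lemma lt_of_icons_lt {m m' : ℤ} {s : Addr} (h : addrLt (icons m s) (icons m' s)) : m < m' := by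
  rcases cons_lt_cons.mp h with h | ⟨_, h⟩
  · exact_mod_cast h
  · exact absurd h (addrLt_irrefl s)

lemma icons_inj {m m' : ℤ} {s s' : Addr} (h : icons m s = icons m' s') : m = m' ∧ s = s' := by
  obtain ⟨h1, h2⟩ := cons_eq_cons.mp h
  exact ⟨by exact_mod_cast h1, h2⟩

lemma icons_ne_top (m : ℤ) (s : Addr) : icons m s ≠ topAddr := by
  intro h
  have := congrFun h 0
  exact WithTop.coe_ne_top this

lemma itin_star {s r : Addr} {k : ℕ} (h : shiftIter r k = topAddr) : itin s r k = .star := by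
  simp [itin, h]

lemma itin_bdy {s r : Addr} {k : ℕ} {m : ℤ} (h : shiftIter r k = icons m s) :
    itin s r k = .bdy m := by
  have hnt : shiftIter r k ≠ topAddr := h ▸ icons_ne_top m s
  have hex : ∃ j : ℤ, shiftIter r k = consAddr ((j : ℝ) : Entry) s := ⟨m, h⟩
  rw [itin, if_neg hnt, dif_pos hex]
  exact congrArg ItinEntry.bdy (icons_inj (hex.choose_spec.symm.trans h)).1

lemma itin_int {s r : Addr} {k : ℕ} {m : ℤ}
    (h1 : addrLt (icons m s) (shiftIter r k))
    (h2 : addrLt (shiftIter r k) (icons (m+1) s)) :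
    itin s r k = .int m := by
  have hnt : shiftIter r k ≠ topAddr := by
    intro h; rw [h] at h2; exact not_top_addrLt _ h2
  have hnb : ¬ ∃ j : ℤ, shiftIter r k = consAddr ((j : ℝ) : Entry) s := by
    rintro ⟨j, hj⟩
    rw [hj] at h1 h2
    have a1 := lt_of_icons_lt h1
    have a2 := lt_of_icons_lt h2
    omega
  have hex : ∃ j : ℤ, addrLt (consAddr ((j : ℝ) : Entry) s) (shiftIter r k) ∧
      addrLt (shiftIter r k) (consAddr (((j + 1 : ℤ) : ℝ) : Entry) s) := ⟨m, h1, h2⟩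
  rw [itin, if_neg hnt, dif_neg hnb, dif_pos hex]
  obtain ⟨c1, c2⟩ := hex.choose_spec
  have a1 : hex.choose < m + 1 := lt_of_icons_lt (addrLt_trans c1 h2)
  have a2 : m < hex.choose + 1 := lt_of_icons_lt (addrLt_trans h1 c2)
  exact congrArg ItinEntry.int (by omega)

lemma sdot_ne_top {a : Addr} (h : InSDot a) : a ≠ topAddr := by
  intro hT
  rcases h with h | ⟨n, hn, _, _, h3, _⟩
  · obtain ⟨m, hm⟩ := h 0
    rw [hT] at hm
    exact WithTop.coe_ne_top hm.symm
  · obtain ⟨m, hm⟩ := h3 (n-2) (by omega)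
    rw [hT] at hm
    exact WithTop.coe_ne_top hm.symm

lemma sdot_shift {a : Addr} (h : InSDot a) (hne : shift a ≠ topAddr) : InSDot (shift a) := by
  rcases h with h | ⟨n, hn, _, h2, h3, h4⟩
  · exact Or.inl fun k => h (k+1)
  · rcases Nat.lt_or_ge n 3 with h' | h'
    · exact absurd (funext fun k => h4 (k+1) (by omega)) hne
    · exact Or.inr ⟨n-1, by omega, ⟨by omega, fun k hk => h2 (k+1) (by omega),
        fun k hk => h3 (k+1) (by omega), fun k hk => h4 (k+1) (by omega)⟩⟩

lemma sdot_shiftIter {t : Addr} (h : InSDot t) :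
    ∀ k, shiftIter t k ≠ topAddr → InSDot (shiftIter t k) := by
  intro k
  induction k with
  | zero => intro _; exact h
  | succ k ih =>
    intro hne
    have hk : shiftIter t k ≠ topAddr := by
      intro hT
      exact hne (by rw [← shift_shiftIter, hT]; rfl)
    have := sdot_shift (ih hk) (by rw [shift_shiftIter]; exact hne)
    rwa [shift_shiftIter] at this

lemma sdot_head {a : Addr} (h : InSDot a) :
    (∃ m : ℤ, a 0 = ((m : ℝ) : Entry)) ∨
    (∃ m : ℤ, a 0 = (((m : ℝ) + 1/2 : ℝ) : Entry) ∧ shift a = topAddr) := by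
  rcases h with h | ⟨n, hn, _, h2, h3, h4⟩
  · exact Or.inl (h 0)
  · rcases Nat.lt_or_ge n 3 with h' | h'
    · obtain ⟨m, hm⟩ := h3 0 (by omega)
      exact Or.inr ⟨m, hm, funext fun k => h4 (k+1) (by omega)⟩
    · exact Or.inl (h2 0 (by omega))

lemma shiftIter_eq_cons {t : Addr} {k : ℕ} {x : Entry} (hm : shiftIter t k 0 = x) :
    shiftIter t k = consAddr x (shiftIter t (k+1)) := by
  conv_lhs => rw [eq_cons_self (shiftIter t k)]
  rw [hm, shift_shiftIter]

lemma itin_head_int_lt {s t : Addr} {k : ℕ} {m : ℤ} (hm : shiftIter t k 0 = ((m : ℝ) : Entry))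
    (hx : addrLt (shiftIter t (k+1)) s) : itin s t k = .int (m-1) := by
  have hc := shiftIter_eq_cons hm
  have h1 : addrLt (icons (m-1) s) (shiftIter t k) := by
    rw [hc]; exact cons_lt_cons.mpr (Or.inl (icoe_lt_icoe (by omega)))
  have h2 : addrLt (shiftIter t k) (icons (m - 1 + 1) s) := by
    rw [hc, show (m - 1 + 1 : ℤ) = m by omega]
    exact cons_lt_cons.mpr (Or.inr ⟨rfl, hx⟩)
  exact itin_int h1 h2

lemma itin_head_int_eq {s t : Addr} {k : ℕ} {m : ℤ} (hm : shiftIter t k 0 = ((m : ℝ) : Entry))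
    (hx : shiftIter t (k+1) = s) : itin s t k = .bdy m := by
  have hc := shiftIter_eq_cons hm
  rw [hx] at hc
  exact itin_bdy hc

lemma itin_head_int_gt {s t : Addr} {k : ℕ} {m : ℤ} (hm : shiftIter t k 0 = ((m : ℝ) : Entry))
    (hx : addrLt s (shiftIter t (k+1))) : itin s t k = .int m := by
  have hc := shiftIter_eq_cons hm
  have h1 : addrLt (icons m s) (shiftIter t k) := by
    rw [hc]; exact cons_lt_cons.mpr (Or.inr ⟨rfl, hx⟩)
  have h2 : addrLt (shiftIter t k) (icons (m + 1) s) := by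
    rw [hc]; exact cons_lt_cons.mpr (Or.inl (icoe_lt_icoe (by omega)))
  exact itin_int h1 h2

lemma itin_head_half {s t : Addr} {k : ℕ} {m : ℤ}
    (hm : shiftIter t k 0 = (((m : ℝ) + 1/2 : ℝ) : Entry)) : itin s t k = .int m := by
  have hc := shiftIter_eq_cons hm
  have h1 : addrLt (icons m s) (shiftIter t k) := by
    rw [hc]
    refine cons_lt_cons.mpr (Or.inl ?_)
    exact_mod_cast (by linarith : (m : ℝ) < (m : ℝ) + 1/2)
  have h2 : addrLt (shiftIter t k) (icons (m + 1) s) := by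
    rw [hc]
    refine cons_lt_cons.mpr (Or.inl ?_)
    have : ((m : ℝ) + 1/2 : ℝ) < ((m + 1 : ℤ) : ℝ) := by push_cast; linarith
    exact_mod_cast this
  exact itin_int h1 h2

end Stmt6Aux

/-- **Itineraries and Change of Partition.** Let `s¹ < s²` in `Ṡ`, `t ∈ Ṡ`,
and `j ≥ 1` with `σ^j(t)` defined. The `j`-th entries of `itin_{s¹}(t)` and `itin_{s²}(t)`
coincide iff `σ^j(t) ∉ [s¹, s²]`. Consequently `itin⁻_{s¹}(t) = itin⁺_{s²}(t)` iff
`σ^k(t) ∉ (s¹, s²)` for every `k ≥ 1` for which `σ^k(t)` is defined. -/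
theorem stmt6 (s1 s2 : Addr) (hs1 : InSDot s1) (hs2 : InSDot s2) (hlt : addrLt s1 s2)
    (t : Addr) (ht : InSDot t) :
    (∀ j, 1 ≤ j → shiftDef t j →
      (itin s1 t (j - 1) = itin s2 t (j - 1) ↔
        ¬(addrLe s1 (shiftIter t j) ∧ addrLe (shiftIter t j) s2))) ∧
    (itinMinus s1 t = itinPlus s2 t ↔
      ∀ k, 1 ≤ k → shiftDef t k →
        ¬(addrLt s1 (shiftIter t k) ∧ addrLt (shiftIter t k) s2)) := by
  classical
  open Stmt6Aux in
  constructor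
  · intro j hj hdef
    obtain ⟨k, rfl⟩ : ∃ k, j = k + 1 := ⟨j - 1, by omega⟩
    simp only [Nat.add_sub_cancel]
    have hrnt : shiftIter t k ≠ topAddr := hdef k (by omega)
    have hrS : InSDot (shiftIter t k) := sdot_shiftIter ht k hrnt
    rcases sdot_head hrS with ⟨m, hm⟩ | ⟨m, hm, htop⟩
    · -- integer head
      rcases addr_trichotomy (shiftIter t (k+1)) s1 with hx1 | hx1 | hx1
      · have hx2 : addrLt (shiftIter t (k+1)) s2 := addrLt_trans hx1 hlt
        rw [itin_head_int_lt hm hx1, itin_head_int_lt hm hx2]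
        simp only [true_iff]
        rintro ⟨h1, _⟩
        rcases h1 with h1 | h1
        · exact addrLt_asymm h1 hx1
        · rw [← h1] at hx1; exact addrLt_irrefl s1 hx1
      · have hx2 : addrLt (shiftIter t (k+1)) s2 := by rw [hx1]; exact hlt
        rw [itin_head_int_eq hm hx1, itin_head_int_lt hm hx2]
        constructor
        · intro h; exact absurd h (by simp)
        · intro h
          exact (h ⟨Or.inr hx1.symm, Or.inl hx2⟩).elim
      · rcases addr_trichotomy (shiftIter t (k+1)) s2 with hx2 | hx2 | hx2
        · rw [itin_head_int_gt hm hx1, itin_head_int_lt hm hx2]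
          constructor
          · intro h
            have := ItinEntry.int.inj h
            omega
          · intro h
            exact (h ⟨Or.inl hx1, Or.inl hx2⟩).elim
        · rw [itin_head_int_gt hm hx1, itin_head_int_eq hm hx2]
          constructor
          · intro h; exact absurd h (by simp)
          · intro h
            exact (h ⟨Or.inl hx1, Or.inr hx2⟩).elim
        · rw [itin_head_int_gt hm hx1, itin_head_int_gt hm hx2]
          simp only [true_iff]
          rintro ⟨_, h2⟩
          rcases h2 with h2 | h2
          · exact addrLt_asymm h2 hx2
          · rw [h2] at hx2; exact addrLt_irrefl s2 hx2
    · -- half-integer head: shiftIter t (k+1) = ⊤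
      rw [shift_shiftIter] at htop
      rw [itin_head_half hm, itin_head_half hm]
      simp only [true_iff]
      rintro ⟨_, h2⟩
      rcases h2 with h2 | h2
      · rw [htop] at h2; exact not_top_addrLt s2 h2
      · rw [htop] at h2; exact sdot_ne_top hs2 h2.symm
  · constructor
    · intro heq k hk hdef
      obtain ⟨k, rfl⟩ : ∃ k', k = k' + 1 := ⟨k - 1, by omega⟩
      rintro ⟨h1, h2⟩
      have hrnt : shiftIter t k ≠ topAddr := hdef k (by omega)
      have hthis := congrFun heq k
      rcases sdot_head (sdot_shiftIter ht k hrnt) with ⟨m, hm⟩ | ⟨m, hm, htop⟩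
      · rw [itinMinus, itinPlus, itin_head_int_gt hm h1, itin_head_int_lt hm h2] at hthis
        have := ItinEntry.int.inj hthis
        omega
      · rw [shift_shiftIter] at htop
        rw [htop] at h2
        exact not_top_addrLt s2 h2
    · intro hcond
      funext k
      by_cases hrnt : shiftIter t k = topAddr
      · rw [itinMinus, itinPlus, itin_star hrnt, itin_star hrnt]; rfl
      · have hdef : shiftDef t (k+1) := by
          intro i hi hT
          exact hrnt (shiftIter_top_mono hT (by omega))
        have hx := hcond (k+1) (by omega) hdef
        rcases sdot_head (sdot_shiftIter ht k hrnt) with ⟨m, hm⟩ | ⟨m, hm, _⟩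
        · rcases addr_trichotomy (shiftIter t (k+1)) s1 with hx1 | hx1 | hx1
          · have hx2 : addrLt (shiftIter t (k+1)) s2 := addrLt_trans hx1 hlt
            rw [itinMinus, itinPlus, itin_head_int_lt hm hx1, itin_head_int_lt hm hx2]; rfl
          · have hx2 : addrLt (shiftIter t (k+1)) s2 := by rw [hx1]; exact hlt
            rw [itinMinus, itinPlus, itin_head_int_eq hm hx1, itin_head_int_lt hm hx2]; rfl
          · rcases addr_trichotomy (shiftIter t (k+1)) s2 with hx2 | hx2 | hx2
            · exact absurd ⟨hx1, hx2⟩ hx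
            · rw [itinMinus, itinPlus, itin_head_int_gt hm hx1, itin_head_int_eq hm hx2]; rfl
            · rw [itinMinus, itinPlus, itin_head_int_gt hm hx1, itin_head_int_gt hm hx2]; rfl
        · rw [itinMinus, itinPlus, itin_head_half hm, itin_head_half hm]; rfl

end
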